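/- For every integer n ≥ 5, the number of reverse alternating permutations of [n] with exactly ⌈(n+1)/2⌉ fixed points equals D_{⌊(n-1)/2⌋}, the number of derangements of [⌊(n-1)/2⌋]. -/
import Mathlib


/-- `π` is an alternating permutation: `π 1 > π 2 < π 3 > π 4 < ⋯`
(here stated with 0-indexed positions). -/
def IsAlternating {n : ℕ} (π : Equiv.Perm (Fin n)) : Prop :=
  ∀ i : ℕ, ∀ h : i + 1 < n,
    if i % 2 = 0 then π ⟨i + 1, h⟩ < π ⟨i, Nat.lt_of_succ_lt h⟩
    else π ⟨i, Nat.lt_of_succ_lt h⟩ < π ⟨i + 1, h⟩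

/-- `π` is a reverse alternating permutation: `π 1 < π 2 > π 3 < π 4 > ⋯`
(here stated with 0-indexed positions). -/
def IsRevAlternating {n : ℕ} (π : Equiv.Perm (Fin n)) : Prop :=
  ∀ i : ℕ, ∀ h : i + 1 < n,
    if i % 2 = 0 then π ⟨i, Nat.lt_of_succ_lt h⟩ < π ⟨i + 1, h⟩
    else π ⟨i + 1, h⟩ < π ⟨i, Nat.lt_of_succ_lt h⟩

/-- The number of fixed points of a permutation of `Fin n`. -/
def fixedPointCount {n : ℕ} (π : Equiv.Perm (Fin n)) : ℕ :=
  (Finset.univ.filter fun i => π i = i).card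

namespace StanleyAux

open Equiv Finset Function

variable {n m : ℕ}

def sVal (σ : Equiv.Perm (Fin m)) (i : Fin m) : ℕ :=
  if (σ i).val ≤ i.val then 2 * i.val + 2 else 2 * i.val + 1

lemma sVal_lb (σ : Equiv.Perm (Fin m)) (i : Fin m) : 2 * i.val + 1 ≤ sVal σ i := by
  unfold sVal; split <;> omega

lemma sVal_ub (σ : Equiv.Perm (Fin m)) (i : Fin m) : sVal σ i ≤ 2 * i.val + 2 := by
  unfold sVal; split <;> omega

lemma sVal_idx {σ σ' : Equiv.Perm (Fin m)} {i j : Fin m}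
    (h : sVal σ i = sVal σ' j) : i = j := by
  have h1 := sVal_lb σ i; have h2 := sVal_ub σ i
  have h3 := sVal_lb σ' j; have h4 := sVal_ub σ' j
  exact Fin.ext (by omega)

def sFin (hn : 2 * m < n) (σ : Equiv.Perm (Fin m)) (i : Fin m) : Fin n :=
  ⟨sVal σ i, by have := sVal_ub σ i; have := i.isLt; omega⟩

@[simp] lemma sFin_val (hn : 2 * m < n) (σ : Equiv.Perm (Fin m)) (i : Fin m) :
    (sFin hn σ i).val = sVal σ i := rfl

lemma sFin_injective (hn : 2 * m < n) (σ : Equiv.Perm (Fin m)) :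
    Function.Injective (sFin hn σ) := by
  intro i j h
  exact sVal_idx (congrArg Fin.val h)

noncomputable def Fperm (hn : 2 * m < n) (σ : Equiv.Perm (Fin m)) : Equiv.Perm (Fin n) :=
  letI : DecidablePred (· ∈ Set.range (sFin hn σ)) := Classical.decPred _
  σ.extendDomain (Equiv.ofInjective _ (sFin_injective hn σ))

lemma Fperm_apply_sFin (hn : 2 * m < n) (σ : Equiv.Perm (Fin m)) (i : Fin m) :
    Fperm hn σ (sFin hn σ i) = sFin hn σ (σ i) := by
  unfold Fperm
  letI : DecidablePred (· ∈ Set.range (sFin hn σ)) := Classical.decPred _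
  have h := Equiv.Perm.extendDomain_apply_image σ
    (Equiv.ofInjective _ (sFin_injective hn σ)) i
  simpa using h

lemma Fperm_apply_not (hn : 2 * m < n) (σ : Equiv.Perm (Fin m)) {x : Fin n}
    (hx : ∀ i, sFin hn σ i ≠ x) : Fperm hn σ x = x := by
  unfold Fperm
  letI : DecidablePred (· ∈ Set.range (sFin hn σ)) := Classical.decPred _
  exact Equiv.Perm.extendDomain_apply_not_subtype σ
    (Equiv.ofInjective _ (sFin_injective hn σ)) (by rintro ⟨i, rfl⟩; exact hx i rfl)

/-- Key structural description of `Fperm` on a pair of positions `{2i+1, 2i+2}`. -/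
lemma pair_spec (hn : 2 * m < n) (σ : Equiv.Perm (Fin m)) (hder : ∀ i, σ i ≠ i)
    (i : Fin m) (x y : Fin n) (hx : x.val = 2 * i.val + 1) (hy : y.val = 2 * i.val + 2) :
    (2 * i.val + 3 ≤ (Fperm hn σ x).val ∧ (Fperm hn σ y).val = 2 * i.val + 2) ∨
    ((Fperm hn σ x).val = 2 * i.val + 1 ∧ (Fperm hn σ y).val ≤ 2 * i.val) := by
  rcases le_or_gt (σ i).val i.val with hle | hlt
  · right
    have hσlt : (σ i).val < i.val := lt_of_le_of_ne hle (fun h => hder i (Fin.ext h))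
    have hsv : sVal σ i = 2 * i.val + 2 := by unfold sVal; rw [if_pos hle]
    have hxfix : Fperm hn σ x = x := by
      apply Fperm_apply_not
      intro j hj
      have hv : sVal σ j = 2 * i.val + 1 := by rw [← hx]; exact congrArg Fin.val hj
      have h1 := sVal_lb σ j; have h2 := sVal_ub σ j
      have hji : j = i := Fin.ext (by omega)
      rw [hji, hsv] at hv; omega
    have hyim : y = sFin hn σ i := Fin.ext (by rw [hy, sFin_val, hsv])
    have hyap : Fperm hn σ y = sFin hn σ (σ i) := by rw [hyim, Fperm_apply_sFin]
    constructor
    · rw [hxfix, hx]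
    · rw [hyap, sFin_val]
      have := sVal_ub σ (σ i); omega
  · left
    have hsv : sVal σ i = 2 * i.val + 1 := by unfold sVal; rw [if_neg (by omega)]
    have hxim : x = sFin hn σ i := Fin.ext (by rw [hx, sFin_val, hsv])
    have hxap : Fperm hn σ x = sFin hn σ (σ i) := by rw [hxim, Fperm_apply_sFin]
    have hyfix : Fperm hn σ y = y := by
      apply Fperm_apply_not
      intro j hj
      have hv : sVal σ j = 2 * i.val + 2 := by rw [← hy]; exact congrArg Fin.val hj
      have h1 := sVal_lb σ j; have h2 := sVal_ub σ j
      have hji : j = i := Fin.ext (by omega)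
      rw [hji, hsv] at hv; omega
    constructor
    · rw [hxap, sFin_val]
      have := sVal_lb σ (σ i); omega
    · rw [hyfix, hy]

lemma Fperm_fix_small (hn : 2 * m < n) (σ : Equiv.Perm (Fin m)) {x : Fin n}
    (hx : x.val = 0) : Fperm hn σ x = x := by
  apply Fperm_apply_not
  intro j hj
  have hv : sVal σ j = 0 := by rw [← hx]; exact congrArg Fin.val hj
  have := sVal_lb σ j; omega

lemma Fperm_fix_top (hn : 2 * m < n) (σ : Equiv.Perm (Fin m)) {x : Fin n}
    (hx : x.val = 2 * m + 1) : Fperm hn σ x = x := by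
  apply Fperm_apply_not
  intro j hj
  have hv : sVal σ j = 2 * m + 1 := by rw [← hx]; exact congrArg Fin.val hj
  have := sVal_ub σ j; have := j.isLt; omega

lemma Fperm_alt (hn : 2 * m < n) (hn2 : n ≤ 2 * m + 2) (hm : 2 ≤ m)
    (σ : Equiv.Perm (Fin m)) (hder : ∀ i, σ i ≠ i) :
    IsRevAlternating (Fperm hn σ) := by
  intro p hp
  rcases Nat.even_or_odd p with ⟨r, hr⟩ | ⟨k, hk⟩
  · -- p even
    rw [if_pos (by omega)]
    rw [Fin.lt_def]
    rcases Nat.eq_zero_or_pos r with hr0 | hrpos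
    · -- p = 0
      have hp0 : p = 0 := by omega
      subst hp0
      have h0 : Fperm hn σ ⟨0, Nat.lt_of_succ_lt hp⟩ = ⟨0, Nat.lt_of_succ_lt hp⟩ :=
        Fperm_fix_small hn σ rfl
      rw [h0]
      have h2n : 2 * (0:ℕ) + 2 < n := by omega
      have := pair_spec hn σ hder ⟨0, by omega⟩ ⟨0 + 1, hp⟩ ⟨2, h2n⟩ (by simp) (by simp)
      simp only [Fin.val_mk] at this ⊢
      omega
    · -- p = 2k+2 with k = r - 1
      obtain ⟨k, hk⟩ : ∃ k, p = 2 * k + 2 := ⟨r - 1, by omega⟩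
      have hkm : k < m := by omega
      have hx1 : 2 * k + 1 < n := by omega
      have h1 := pair_spec hn σ hder ⟨k, hkm⟩ ⟨2 * k + 1, hx1⟩ ⟨p, Nat.lt_of_succ_lt hp⟩
        (by simp) (by simp [hk])
      simp only [Fin.val_mk] at h1
      by_cases hk1 : k + 1 < m
      · have hy2 : 2 * (k + 1) + 2 < n := by omega
        have h2 := pair_spec hn σ hder ⟨k + 1, hk1⟩ ⟨p + 1, hp⟩ ⟨2 * (k + 1) + 2, hy2⟩
          (by simp [hk]; omega) (by simp)
        simp only [Fin.val_mk] at h2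
        omega
      · -- k + 1 = m, so p + 1 = 2m + 1 and it is fixed
        have hkm1 : k + 1 = m := by omega
        have htop : Fperm hn σ ⟨p + 1, hp⟩ = ⟨p + 1, hp⟩ :=
          Fperm_fix_top hn σ (by simp [hk]; omega)
        rw [htop]
        simp only [Fin.val_mk]
        omega
  · -- p odd, p = 2k+1
    rw [if_neg (by omega)]
    rw [Fin.lt_def]
    have hkm : k < m := by omega
    have h1 := pair_spec hn σ hder ⟨k, hkm⟩ ⟨p, Nat.lt_of_succ_lt hp⟩ ⟨p + 1, hp⟩
      (by simp [hk]) (by simp [hk])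
    simp only [Fin.val_mk] at h1
    omega

lemma Fperm_fixed_iff (hn : 2 * m < n) (σ : Equiv.Perm (Fin m)) (hder : ∀ i, σ i ≠ i)
    (x : Fin n) : Fperm hn σ x = x ↔ ∀ i, sFin hn σ i ≠ x := by
  constructor
  · intro hfix i hi
    rw [← hi, Fperm_apply_sFin] at hfix
    have := sFin_injective hn σ hfix
    exact hder i this
  · exact Fperm_apply_not hn σ

lemma Fperm_count (hn : 2 * m < n) (σ : Equiv.Perm (Fin m)) (hder : ∀ i, σ i ≠ i) :
    fixedPointCount (Fperm hn σ) = n - m := by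
  unfold fixedPointCount
  have hset : (univ.filter fun x => Fperm hn σ x = x) = univ \ univ.image (sFin hn σ) := by
    ext x
    simp only [mem_filter, mem_univ, true_and, mem_sdiff, mem_image]
    rw [Fperm_fixed_iff hn σ hder]
    push_neg
    simp only [mem_univ, true_implies, forall_const]
  rw [hset, card_sdiff_of_subset (subset_univ _), card_univ,
    Finset.card_image_of_injective _ (sFin_injective hn σ), card_univ,
    Fintype.card_fin, Fintype.card_fin]

lemma Fperm_inj (hn : 2 * m < n) {σ σ' : Equiv.Perm (Fin m)}
    (hder : ∀ i, σ i ≠ i) (hder' : ∀ i, σ' i ≠ i)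
    (h : Fperm hn σ = Fperm hn σ') : σ = σ' := by
  have key : ∀ x, (∀ i, sFin hn σ i ≠ x) ↔ (∀ i, sFin hn σ' i ≠ x) := fun x =>
    (Fperm_fixed_iff hn σ hder x).symm.trans
      (by rw [h]; exact Fperm_fixed_iff hn σ' hder' x)
  have hs : ∀ i, sFin hn σ i = sFin hn σ' i := by
    intro i
    have hne : ¬ ∀ j, sFin hn σ' j ≠ sFin hn σ i := fun hall => ((key _).mpr hall) i rfl
    push_neg at hne
    obtain ⟨j, hj⟩ := hne
    have hji : j = i := sVal_idx (congrArg Fin.val hj)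
    rw [hji] at hj
    exact hj.symm
  apply Equiv.ext
  intro i
  have h1 : Fperm hn σ (sFin hn σ i) = sFin hn σ (σ i) := Fperm_apply_sFin hn σ i
  have h2 : Fperm hn σ' (sFin hn σ' i) = sFin hn σ' (σ' i) := Fperm_apply_sFin hn σ' i
  rw [← hs i, ← h, h1] at h2
  rw [← hs (σ' i)] at h2
  exact sFin_injective hn σ h2


lemma Fperm_surj (hn : 2 * m < n) (hn2 : n ≤ 2 * m + 2) (hm : 2 ≤ m)
    (π : Equiv.Perm (Fin n)) (halt : IsRevAlternating π)
    (hfix : fixedPointCount π = n - m) :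
    ∃ σ : Equiv.Perm (Fin m), (∀ i, σ i ≠ i) ∧ Fperm hn σ = π := by
  classical
  -- at most one fixed point per pair {2k+1, 2k+2}
  have hone : ∀ (x y : Fin n), x.val % 2 = 1 → y.val = x.val + 1 →
      π x = x → π y = y → False := by
    intro x y hpar hxy h1 h2
    have hlt : x.val + 1 < n := by rw [← hxy]; exact y.isLt
    have h := halt x.val hlt
    rw [if_neg (by omega)] at h
    have ex : (⟨x.val, Nat.lt_of_succ_lt hlt⟩ : Fin n) = x := Fin.ext rfl
    have ey : (⟨x.val + 1, hlt⟩ : Fin n) = y := Fin.ext hxy.symm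
    rw [ex, ey, h1, h2, Fin.lt_def] at h
    omega
  -- the non-fixed element of each pair
  have hb1 : ∀ i : Fin m, 2 * i.val + 1 < n := fun i => by have := i.isLt; omega
  have hb2 : ∀ i : Fin m, 2 * i.val + 2 < n := fun i => by have := i.isLt; omega
  set g : Fin m → Fin n := fun i =>
    if π ⟨2 * i.val + 1, hb1 i⟩ = ⟨2 * i.val + 1, hb1 i⟩ then ⟨2 * i.val + 2, hb2 i⟩
    else ⟨2 * i.val + 1, hb1 i⟩ with hg
  have hg_val : ∀ i : Fin m, (g i).val = 2 * i.val + 1 ∨ (g i).val = 2 * i.val + 2 := by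
    intro i; rw [hg]; dsimp only; split <;> simp
  have hg_nfix : ∀ i, π (g i) ≠ g i := by
    intro i
    rw [hg]; dsimp only
    split
    · rename_i hcase
      intro h2
      exact hone ⟨2 * i.val + 1, hb1 i⟩ ⟨2 * i.val + 2, hb2 i⟩
        (show (2 * i.val + 1) % 2 = 1 by omega)
        (show 2 * i.val + 2 = 2 * i.val + 1 + 1 by omega) hcase h2
    · rename_i hcase
      exact hcase
  have hg_inj : Function.Injective g := by
    intro i j h
    have h1 := hg_val i; have h2 := hg_val j
    have := congrArg Fin.val h
    exact Fin.ext (by omega)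
  -- counting: the image of g is exactly the set of non-fixed points
  have hcard : (univ.filter fun x : Fin n => ¬ π x = x).card = m := by
    have h1 := Finset.card_filter_add_card_filter_not
      (s := (univ : Finset (Fin n))) (p := fun x => π x = x)
    unfold fixedPointCount at hfix
    rw [card_univ, Fintype.card_fin] at h1
    omega
  have himg : univ.image g = univ.filter (fun x : Fin n => ¬ π x = x) := by
    apply Finset.eq_of_subset_of_card_le
    · intro x hx
      simp only [mem_image, mem_univ, true_and] at hx
      obtain ⟨i, rfl⟩ := hx
      simp only [mem_filter, mem_univ, true_and]
      exact hg_nfix i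
    · rw [hcard, Finset.card_image_of_injective _ hg_inj, card_univ, Fintype.card_fin]
  have hmem : ∀ x : Fin n, ¬ π x = x ↔ ∃ i, g i = x := by
    intro x
    constructor
    · intro hx
      have : x ∈ univ.image g := by rw [himg]; simp only [mem_filter, mem_univ, true_and]; exact hx
      simpa using this
    · rintro ⟨i, rfl⟩; exact hg_nfix i
  -- the induced permutation
  have hex : ∀ i, ∃ j, g j = π (g i) := by
    intro i
    apply (hmem _).mp
    intro h
    exact hg_nfix i (π.injective h)
  choose σf hσf using hex
  have hσf_inj : Function.Injective σf := by
    intro i j h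
    apply hg_inj
    apply π.injective
    rw [← hσf i, ← hσf j, h]
  let σ : Equiv.Perm (Fin m) := Equiv.ofBijective σf (Finite.injective_iff_bijective.mp hσf_inj)
  have hσ_app : ∀ i, σ i = σf i := fun i => rfl
  have hder : ∀ i, σ i ≠ i := by
    intro i h
    rw [hσ_app] at h
    apply hg_nfix i
    rw [← hσf i, h]
  -- the support matches
  have hgs : ∀ i, g i = sFin hn σ i := by
    intro i
    apply Fin.ext
    rw [sFin_val]
    have hgb1 := hg_val (σf i)
    have hπg : (π (g i)).val = (g (σf i)).val := congrArg Fin.val (hσf i).symm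
    have hlt2 : 2 * i.val + 1 + 1 < n := hb2 i
    have h := halt (2 * i.val + 1) hlt2
    rw [if_neg (by omega), Fin.lt_def] at h
    by_cases hcase : π ⟨2 * i.val + 1, hb1 i⟩ = ⟨2 * i.val + 1, hb1 i⟩
    · -- 2i+1 fixed; g i = 2i+2; σ i < i
      have hgv : (g i).val = 2 * i.val + 2 := by rw [hg]; dsimp only; rw [if_pos hcase]
      have e1 : (⟨2 * i.val + 1 + 1, hlt2⟩ : Fin n) = g i := Fin.ext (by rw [hgv])
      rw [e1] at h
      have e2 : (π (⟨2 * i.val + 1, Nat.lt_of_succ_lt hlt2⟩ : Fin n)).val = 2 * i.val + 1 := by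
        rw [show (⟨2 * i.val + 1, Nat.lt_of_succ_lt hlt2⟩ : Fin n) = ⟨2 * i.val + 1, hb1 i⟩
          from rfl, hcase]
      rw [e2] at h
      -- h : (π (g i)).val < 2 i + 1
      unfold sVal
      rw [if_pos (show (σ i).val ≤ i.val by rw [hσ_app]; omega), hgv]
    · -- 2i+1 not fixed; g i = 2i+1; 2i+2 is fixed; σ i > i
      have hgv : (g i).val = 2 * i.val + 1 := by rw [hg]; dsimp only; rw [if_neg hcase]
      have hfix2 : π ⟨2 * i.val + 2, hb2 i⟩ = ⟨2 * i.val + 2, hb2 i⟩ := by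
        by_contra hc
        obtain ⟨j, hj⟩ := (hmem _).mp hc
        have h1 := hg_val j
        have hv := congrArg Fin.val hj
        simp only [Fin.val_mk] at hv
        have hji : j = i := Fin.ext (by omega)
        rw [hji] at hj
        have hv2 := congrArg Fin.val hj
        simp only [Fin.val_mk] at hv2
        omega
      have e1 : (π (⟨2 * i.val + 1 + 1, hlt2⟩ : Fin n)).val = 2 * i.val + 2 := by
        rw [show (⟨2 * i.val + 1 + 1, hlt2⟩ : Fin n) = ⟨2 * i.val + 2, hb2 i⟩
          from rfl, hfix2]
      rw [e1] at h
      have e2 : (⟨2 * i.val + 1, Nat.lt_of_succ_lt hlt2⟩ : Fin n) = g i :=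
        Fin.ext (by rw [hgv])
      rw [e2] at h
      -- h : 2i+2 < (π (g i)).val
      unfold sVal
      rw [if_neg (show ¬ (σ i).val ≤ i.val by rw [hσ_app]; omega), hgv]
  refine ⟨σ, hder, ?_⟩
  apply Equiv.ext
  intro x
  by_cases hx : ∃ i, g i = x
  · obtain ⟨i, rfl⟩ := hx
    calc Fperm hn σ (g i) = Fperm hn σ (sFin hn σ i) := by rw [hgs]
      _ = sFin hn σ (σ i) := Fperm_apply_sFin hn σ i
      _ = g (σ i) := (hgs _).symm
      _ = π (g i) := by rw [hσ_app]; exact hσf i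
  · have h1 : π x = x := by by_contra hc; exact hx ((hmem x).mp hc)
    have h2 : Fperm hn σ x = x := by
      apply Fperm_apply_not
      intro j hj
      exact hx ⟨j, by rw [hgs j]; exact hj⟩
    rw [h1, h2]

end StanleyAux

/-- For every integer `n ≥ 5`, the number of reverse alternating permutations of `[n]` with
exactly `⌈(n+1)/2⌉` fixed points equals `D_{⌊(n-1)/2⌋}`. -/
theorem stanley_conjecture_reverse_alternating (n : ℕ) (hn : 5 ≤ n) :
    Nat.card {π : Equiv.Perm (Fin n) // IsRevAlternating π ∧ fixedPointCount π = (n + 2) / 2} =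
      numDerangements ((n - 1) / 2) := by
  classical
  open StanleyAux in
  set m := (n - 1) / 2 with hm
  have hn1 : 2 * m < n := by omega
  have hn2 : n ≤ 2 * m + 2 := by omega
  have hm2 : 2 ≤ m := by omega
  have hbij : Function.Bijective (fun σp : {σ : Equiv.Perm (Fin m) // ∀ i, σ i ≠ i} =>
      (⟨Fperm hn1 σp.1, Fperm_alt hn1 hn2 hm2 σp.1 σp.2,
        by rw [Fperm_count hn1 σp.1 σp.2]; omega⟩ :
        {π : Equiv.Perm (Fin n) // IsRevAlternating π ∧ fixedPointCount π = (n + 2) / 2})) := by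
    constructor
    · intro a b hab
      exact Subtype.ext (Fperm_inj hn1 a.2 b.2 (congrArg Subtype.val hab))
    · rintro ⟨π, haltp, hfixp⟩
      obtain ⟨σ, hder, hFσ⟩ := Fperm_surj hn1 hn2 hm2 π haltp (by omega)
      exact ⟨⟨σ, hder⟩, Subtype.ext hFσ⟩
  rw [← Nat.card_eq_of_bijective _ hbij]
  have hcd : Nat.card {σ : Equiv.Perm (Fin m) // ∀ i, σ i ≠ i} =
      Fintype.card (derangements (Fin m)) := by
    rw [Nat.card_eq_fintype_card]
    exact Fintype.card_congr (Equiv.subtypeEquivRight fun f => Iff.rfl)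
  rw [hcd, card_derangements_eq_numDerangements, Fintype.card_fin]
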